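/- Let X be a Banach space admitting a decomposition X* = R ⊕ S (topological direct sum) where R is reflexive and S is separable, and suppose R is weak*-closed in X*, so that R = Y^⊥ for some closed subspace Y ⊆ X. Then S is isomorphic to the dual space Y*, hence S is a separable dual space. -/

import Mathlib

/-!
Restriction `f ↦ f|_Y` is a continuous map `X* → Y*` with kernel `Y^⊥ = R`, and it is onto by
Hahn–Banach. Hence it restricts to a linear bijection on the complement `S` of its kernel, and since
`S` is closed in the Banach space `X*`, the open mapping theorem makes this bijection an
isomorphism `S ≃ Y*`.
-/

open NormedSpace Filter Topology
open scoped ENNReal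

noncomputable section

/-- The annihilator of a subspace `Y ⊆ X` inside the continuous dual of `X`. -/
def annih {X : Type*} [SeminormedAddCommGroup X] [NormedSpace ℝ X] (Y : Submodule ℝ X) :
    Submodule ℝ (StrongDual ℝ X) where
  carrier := {f | ∀ y ∈ Y, f y = 0}
  add_mem' := by
    intro a b ha hb y hy
    simp [ContinuousLinearMap.add_apply, ha y hy, hb y hy]
  zero_mem' := by intro y hy; rfl
  smul_mem' := by
    intro c f hf y hy
    simp [hf y hy]

/-- A Banach space is reflexive iff the canonical embedding into its bidual is surjective. -/
def BReflexive (X : Type*) [SeminormedAddCommGroup X] [NormedSpace ℝ X] : Prop :=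
  Function.Surjective (inclusionInDoubleDual ℝ X)

/-- A Banach space is coreflexive iff `X**/J_X(X)` is reflexive. -/
def Coreflexive (X : Type*) [SeminormedAddCommGroup X] [NormedSpace ℝ X] : Prop :=
  (fun (M : Type _) [SeminormedAddCommGroup M] [NormedSpace ℝ M] (f : X →ₗ[ℝ] M) => BReflexive (M ⧸ LinearMap.range f))
    (StrongDual ℝ (StrongDual ℝ X)) (inclusionInDoubleDual ℝ X)

/-- The adjoint of a continuous linear map between normed spaces. -/
def adj {E F : Type*} [SeminormedAddCommGroup E] [NormedSpace ℝ E]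
    [SeminormedAddCommGroup F] [NormedSpace ℝ F] (f : E →L[ℝ] F) :
    StrongDual ℝ F →L[ℝ] StrongDual ℝ E :=
  (ContinuousLinearMap.compL ℝ E F ℝ).flip f

/-- `X` is weak*-sequentially dense in its bidual. -/
def WStarSeqDense (X : Type*) [SeminormedAddCommGroup X] [NormedSpace ℝ X] : Prop :=
  ∀ F : StrongDual ℝ (StrongDual ℝ X), ∃ x : ℕ → X, ∀ f : StrongDual ℝ X,
    Tendsto (fun n => inclusionInDoubleDual ℝ X (x n) f) atTop (𝓝 (F f))

/-- `x` is a point of weak-to-norm continuity of the closed unit ball of `X`. -/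
def wPC (X : Type*) [SeminormedAddCommGroup X] [NormedSpace ℝ X] (x : X) : Prop :=
  ∀ l : Filter X, (∀ᶠ y in l, ‖y‖ ≤ 1) →
    (∀ f : StrongDual ℝ X, Tendsto (fun y => f y) l (𝓝 (f x))) →
    Tendsto id l (𝓝 x)

theorem LinearMap.bijective_comp_subtype_of_isCompl_ker {R M N : Type*} [Ring R]
    [AddCommGroup M] [Module R M] [AddCommGroup N] [Module R N] {f : M →ₗ[R] N}
    (hf : Function.Surjective f) {S : Submodule R M} (h : IsCompl (LinearMap.ker f) S) :
    Function.Bijective (f ∘ₗ S.subtype) := by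
  constructor
  · rw [← LinearMap.ker_eq_bot, LinearMap.ker_eq_bot']
    intro s hs
    have : (s : M) ∈ LinearMap.ker f ⊓ S := ⟨hs, s.2⟩
    rw [h.inf_eq_bot, Submodule.mem_bot] at this
    exact Subtype.ext this
  · intro n
    obtain ⟨m, rfl⟩ := hf n
    obtain ⟨k, hk, s, hs, rfl⟩ := Submodule.mem_sup.mp (h.sup_eq_top ▸ Submodule.mem_top : m ∈ _)
    exact ⟨⟨s, hs⟩, by simp [LinearMap.mem_ker.mp hk]⟩

def ContinuousLinearMap.equivOfIsComplKer {𝕜 E F : Type*} [NontriviallyNormedField 𝕜]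
    [NormedAddCommGroup E] [NormedSpace 𝕜 E] [NormedAddCommGroup F] [NormedSpace 𝕜 F]
    [CompleteSpace F] (f : E →L[𝕜] F) (hf : Function.Surjective f) {S : Submodule 𝕜 E} [CompleteSpace S]
    (h : IsCompl f.ker S) : S ≃L[𝕜] F :=
  have hbij := LinearMap.bijective_comp_subtype_of_isCompl_ker hf h
  ContinuousLinearEquiv.ofBijective (f.comp S.subtypeL) (LinearMap.ker_eq_bot.mpr hbij.1)
    (LinearMap.range_eq_top.mpr hbij.2)

theorem ker_adj_subtypeL {X : Type*} [NormedAddCommGroup X] [NormedSpace ℝ X]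
    (Y : Submodule ℝ X) : (adj Y.subtypeL).ker = annih Y := by
  ext f
  refine ⟨fun hf y hy => congrArg (fun g => g ⟨y, hy⟩) hf, fun hf => ?_⟩
  ext y
  exact hf y y.2

theorem adj_subtypeL_surjective {X : Type*} [NormedAddCommGroup X] [NormedSpace ℝ X]
    (Y : Submodule ℝ X) : Function.Surjective (adj Y.subtypeL) := fun g =>
  let ⟨f, hf, _⟩ := exists_extension_norm_eq Y g
  ⟨f, ContinuousLinearMap.ext hf⟩

theorem stmt19_general (X : Type*) [NormedAddCommGroup X] [NormedSpace ℝ X]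
    (R S : Submodule ℝ (StrongDual ℝ X))
    (hSc : IsClosed (S : Set (StrongDual ℝ X)))
    (hcompl : IsCompl R S)
    (Y : Submodule ℝ X) (hRY : R = annih Y) :
    Nonempty (↥S ≃L[ℝ] StrongDual ℝ ↥Y) := by
  have : CompleteSpace S := hSc.completeSpace_coe
  rw [hRY, ← ker_adj_subtypeL] at hcompl
  exact ⟨(adj Y.subtypeL).equivOfIsComplKer (adj_subtypeL_surjective Y) hcompl⟩

theorem stmt19 (X : Type*) [NormedAddCommGroup X] [NormedSpace ℝ X] [CompleteSpace X]
    (R S : Submodule ℝ (StrongDual ℝ X))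
    (hRc : IsClosed (R : Set (StrongDual ℝ X))) (hSc : IsClosed (S : Set (StrongDual ℝ X)))
    (hcompl : IsCompl R S)
    (hR : BReflexive ↥R) (hS : TopologicalSpace.SeparableSpace ↥S)
    (Y : Submodule ℝ X) (hYc : IsClosed (Y : Set X)) (hRY : R = annih Y) :
    Nonempty (↥S ≃L[ℝ] StrongDual ℝ ↥Y) :=
  stmt19_general X R S hSc hcompl Y hRY
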